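/- Let L : M_d → M_d be a Hermitian-preserving linear map such that ⟨Γ, L⟩ ≥ 0 for every Γ ∈ D(d). Then for every r > 0 there exists η > 0 such that every Hermitian-preserving, unital, trace-preserving linear map Γ on M_d with ‖Γ‖₂ = 1, ⟨Γ, Ad_U⟩ ≥ 0 for all unitaries U ∈ M_d, and ⟨Γ, id⟩ < η satisfies ⟨Γ, L⟩ ≥ −r. -/

import Mathlib

/-!
A compactness argument. Through the inverse of the Choi isomorphism, the norm-one
Hermitian-preserving unital trace-preserving maps `Γ` with `⟨Γ, Ad_U⟩ ≥ 0` for all `U` form a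
compact set `K` of matrices, on which `Γ ↦ ⟨Γ, id⟩ = ⟨Γ, Ad_1⟩` is non-negative and continuous.
Its zeros in `K` lie in `D(d)`, where `⟨Γ, L⟩ ≥ 0`; so on the compact set
`K ∩ {⟨Γ, L⟩ ≤ -r}` the function `⟨Γ, id⟩` has a positive minimum, which serves as `η`.
-/

noncomputable section
open scoped Kronecker
open Filter Topology Matrix

/-- `M_d`, the algebra of `d × d` complex matrices. -/
abbrev Md (d : ℕ) := Matrix (Fin d) (Fin d) ℂ

/-- `Ad_U : X ↦ U* X U` for a unitary `U`. -/
def adU {d : ℕ} (U : Matrix.unitaryGroup (Fin d) ℂ) : Md d →ₗ[ℂ] Md d where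
  toFun X := (U : Md d)ᴴ * X * (U : Md d)
  map_add' X Y := by simp [Matrix.mul_add, Matrix.add_mul]
  map_smul' c X := by simp [Matrix.mul_smul, Matrix.smul_mul]

/-- A linear map is completely positive if it has a Kraus decomposition. -/
def IsCP {d : ℕ} (Φ : Md d →ₗ[ℂ] Md d) : Prop :=
  ∃ (n : ℕ) (V : Fin n → Md d), ∀ X, Φ X = ∑ j, (V j)ᴴ * X * (V j)

def IsUnital {d : ℕ} (Φ : Md d →ₗ[ℂ] Md d) : Prop := Φ 1 = 1

def IsTracePreserving {d : ℕ} (Φ : Md d →ₗ[ℂ] Md d) : Prop :=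
  ∀ X, (Φ X).trace = X.trace

def IsHermitianPreserving {d : ℕ} (Φ : Md d →ₗ[ℂ] Md d) : Prop :=
  ∀ X, Φ Xᴴ = (Φ X)ᴴ

/-- A unital quantum channel: CP, unital and trace-preserving. -/
def IsUnitalChannel {d : ℕ} (Φ : Md d →ₗ[ℂ] Md d) : Prop :=
  IsCP Φ ∧ IsUnital Φ ∧ IsTracePreserving Φ

/-- A mixed unitary channel: a convex combination of unitary conjugations. -/
def IsMixedUnitary {d : ℕ} (Φ : Md d →ₗ[ℂ] Md d) : Prop :=
  ∃ (ℓ : ℕ) (U : Fin ℓ → Matrix.unitaryGroup (Fin d) ℂ) (lam : Fin ℓ → ℝ),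
    (∀ j, 0 ≤ lam j) ∧ (∀ j, lam j ≤ 1) ∧ (∑ j, lam j = 1) ∧
    Φ = ∑ j, (lam j : ℂ) • adU (U j)

/-- The Choi matrix `J(Φ) = (1/d) ∑_{i,j} E_{ij} ⊗ Φ(E_{ij})`. -/
def choi {d : ℕ} (Φ : Md d →ₗ[ℂ] Md d) : Matrix (Fin d × Fin d) (Fin d × Fin d) ℂ :=
  (d : ℂ)⁻¹ • ∑ i : Fin d, ∑ j : Fin d,
    (Matrix.single i j (1 : ℂ)) ⊗ₖ Φ (Matrix.single i j (1 : ℂ))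

/-- `⟨Φ, Ψ⟩ = tr(J(Φ)* J(Ψ))`; this is a real number whenever `Φ, Ψ` are
Hermitian-preserving, so we record its real part. -/
def pairRe {d : ℕ} (Φ Ψ : Md d →ₗ[ℂ] Md d) : ℝ := (((choi Φ)ᴴ * choi Ψ).trace).re

/-- The Hilbert–Schmidt (Choi) norm `‖Φ‖₂ = tr(J(Φ)* J(Φ))^{1/2}`. -/
def hsNorm {d : ℕ} (Φ : Md d →ₗ[ℂ] Md d) : ℝ := Real.sqrt (pairRe Φ Φ)

attribute [local instance] Matrix.normedAddCommGroup Matrix.normedSpace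

/-- The exponential `e^{tL}` of a linear map `L` on `M_d`. -/
def expL {d : ℕ} (L : Md d →ₗ[ℂ] Md d) (t : ℝ) : Md d →ₗ[ℂ] Md d :=
  letI : IsTopologicalRing (Md d →L[ℂ] Md d) :=
    @NonUnitalSeminormedRing.toIsTopologicalRing _
      (@ContinuousLinearMap.toNormedRing ℂ (Md d) _ _ _).toSeminormedRing.toNonUnitalSeminormedRing
  ((NormedSpace.exp ((t : ℂ) • (LinearMap.toContinuousLinearMap L)) :
      Md d →L[ℂ] Md d)).toLinearMap

/-- Membership in `D(d)`: Hermitian-preserving, unital, trace-preserving maps `Γ` with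
`⟨id, Γ⟩ = 0` and `⟨Ad_U, Γ⟩ ≥ 0` for all unitaries `U`. -/
def MemD {d : ℕ} (Γ : Md d →ₗ[ℂ] Md d) : Prop :=
  IsHermitianPreserving Γ ∧ IsUnital Γ ∧ IsTracePreserving Γ ∧
    pairRe LinearMap.id Γ = 0 ∧
    ∀ U : Matrix.unitaryGroup (Fin d) ℂ, 0 ≤ pairRe (adU U) Γ

theorem IsCompact.exists_pos_forall_lt_imp_lt {X : Type*} [TopologicalSpace X] {K : Set X}
    (hK : IsCompact K) {f g : X → ℝ} (hf : Continuous f) (hg : Continuous g)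
    (hf0 : ∀ x ∈ K, 0 ≤ f x) {c : ℝ} (hfg : ∀ x ∈ K, f x = 0 → c < g x) :
    ∃ η > 0, ∀ x ∈ K, f x < η → c < g x := by
  rcases (K ∩ g ⁻¹' Set.Iic c).eq_empty_or_nonempty with hbad | hbad
  · refine ⟨1, one_pos, fun x hx _ => ?_⟩
    by_contra! hgx
    exact hbad.subset ⟨hx, hgx⟩
  · obtain ⟨x₀, ⟨hx₀K, hx₀g⟩, hmin⟩ :=
      (hK.inter_right (isClosed_Iic.preimage hg)).exists_isMinOn hbad hf.continuousOn
    have hpos : 0 < f x₀ := (hf0 x₀ hx₀K).lt_of_ne' fun h => (hfg x₀ hx₀K h).not_ge hx₀g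
    refine ⟨f x₀, hpos, fun x hx hfx => ?_⟩
    by_contra! hgx
    exact (hmin ⟨hx, hgx⟩).not_gt hfx

lemma re_trace_conjTranspose_mul_self {m n : Type*} [Fintype m] [Fintype n]
    (M : Matrix m n ℂ) : (Mᴴ * M).trace.re = ∑ i, ∑ j, ‖M i j‖ ^ 2 := by
  simp only [Matrix.trace, Matrix.diag, Matrix.mul_apply, Matrix.conjTranspose_apply,
    Complex.re_sum]
  rw [Finset.sum_comm]
  refine Finset.sum_congr rfl fun i _ => Finset.sum_congr rfl fun j _ => ?_
  rw [← Complex.normSq_eq_norm_sq, Complex.normSq_apply]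
  simp

-- `‖M‖` is the entrywise sup norm of the local instance `Matrix.normedAddCommGroup`.
lemma norm_le_one_of_re_trace_conjTranspose_mul_self_eq_one {m n : Type*} [Fintype m] [Fintype n]
    {M : Matrix m n ℂ} (hM : (Mᴴ * M).trace.re = 1) : ‖M‖ ≤ 1 := by
  rw [Matrix.norm_le_iff zero_le_one]
  intro i j
  have hij : ‖M i j‖ ^ 2 ≤ 1 := by
    rw [← hM, re_trace_conjTranspose_mul_self]
    refine (Finset.single_le_sum (f := fun j => ‖M i j‖ ^ 2) (fun _ _ => by positivity)
      (Finset.mem_univ j)).trans ?_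
    exact Finset.single_le_sum (f := fun i => ∑ j, ‖M i j‖ ^ 2)
      (fun _ _ => Finset.sum_nonneg fun _ _ => by positivity) (Finset.mem_univ i)
  exact (pow_le_one_iff_of_nonneg (norm_nonneg _) two_ne_zero).mp hij

lemma pairRe_comm {d : ℕ} (Φ Ψ : Md d →ₗ[ℂ] Md d) : pairRe Φ Ψ = pairRe Ψ Φ := by
  rw [pairRe, pairRe, ← Complex.conj_re, ← Complex.star_def, ← Matrix.trace_conjTranspose,
    Matrix.conjTranspose_mul, Matrix.conjTranspose_conjTranspose]

lemma adU_one {d : ℕ} : adU (1 : Matrix.unitaryGroup (Fin d) ℂ) = LinearMap.id := by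
  ext X : 1
  simp [adU]

lemma choi_apply {d : ℕ} (Φ : Md d →ₗ[ℂ] Md d) (a k b l : Fin d) :
    choi Φ (a, k) (b, l) = (d : ℂ)⁻¹ * Φ (Matrix.single a b 1) k l := by
  simp only [choi, Matrix.smul_apply, Matrix.sum_apply, Matrix.kroneckerMap_apply, smul_eq_mul]
  rw [Finset.sum_eq_single a, Finset.sum_eq_single b]
  · simp
  · intro j _ hj
    simp [Matrix.single, hj]
  · simp
  · intro i _ hi
    exact Finset.sum_eq_zero fun j _ => by simp [Matrix.single, hi]
  · simp

def unchoi {d : ℕ} :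
    Matrix (Fin d × Fin d) (Fin d × Fin d) ℂ →ₗ[ℂ] Md d →ₗ[ℂ] Md d :=
  LinearMap.mk₂ ℂ (fun M X => (d : ℂ) • Matrix.of fun k l => ∑ a, ∑ b, X a b * M (a, k) (b, l))
    (fun M N X => by
      ext k l
      simp [mul_add, Finset.sum_add_distrib])
    (fun c M X => by
      ext k l
      simp [Finset.mul_sum, mul_left_comm])
    (fun M X Y => by
      ext k l
      simp [add_mul, mul_add, Finset.sum_add_distrib])
    (fun c M X => by
      ext k l
      simp [Finset.mul_sum, mul_assoc, mul_left_comm])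

lemma unchoi_apply_apply {d : ℕ} (M : Matrix (Fin d × Fin d) (Fin d × Fin d) ℂ) (X : Md d)
    (k l : Fin d) : unchoi M X k l = d * ∑ a, ∑ b, X a b * M (a, k) (b, l) := rfl

lemma unchoi_choi {d : ℕ} (Φ : Md d →ₗ[ℂ] Md d) : unchoi (choi Φ) = Φ := by
  ext X k l
  have hd : (d : ℂ) ≠ 0 := Nat.cast_ne_zero.mpr k.pos.ne'
  conv_rhs => rw [Matrix.matrix_eq_sum_single X]
  simp only [unchoi_apply_apply, choi_apply, map_sum, Matrix.sum_apply, Finset.mul_sum]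
  refine Finset.sum_congr rfl fun a _ => Finset.sum_congr rfl fun b _ => ?_
  rw [show Matrix.single a b (X a b) = X a b • Matrix.single a b 1 by simp, map_smul,
    Matrix.smul_apply, smul_eq_mul]
  field_simp

lemma choi_unchoi {d : ℕ} (M : Matrix (Fin d × Fin d) (Fin d × Fin d) ℂ) :
    choi (unchoi M) = M := by
  ext ⟨a, k⟩ ⟨b, l⟩
  have hd : (d : ℂ) ≠ 0 := Nat.cast_ne_zero.mpr a.pos.ne'
  rw [choi_apply, unchoi_apply_apply, Finset.sum_eq_single a, Finset.sum_eq_single b]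
  · field_simp
    simp
  · intro j _ hj
    simp [Matrix.single, hj.symm]
  · simp
  · intro i _ hi
    exact Finset.sum_eq_zero fun j _ => by simp [Matrix.single, hi.symm]
  · simp

lemma continuous_unchoi_apply {d : ℕ} (X : Md d) : Continuous fun M => unchoi M X :=
  (unchoi.flip X).continuous_of_finiteDimensional

lemma continuous_pairRe_unchoi_left {d : ℕ} (Ψ : Md d →ₗ[ℂ] Md d) :
    Continuous fun M => pairRe (unchoi M) Ψ := by
  simp only [pairRe, choi_unchoi]
  fun_prop

lemma continuous_hsNorm_unchoi {d : ℕ} :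
    Continuous fun M : Matrix (Fin d × Fin d) (Fin d × Fin d) ℂ => hsNorm (unchoi M) := by
  simp only [hsNorm, pairRe, choi_unchoi]
  fun_prop

def IsNormalizedDual {d : ℕ} (Γ : Md d →ₗ[ℂ] Md d) : Prop :=
  IsHermitianPreserving Γ ∧ IsUnital Γ ∧ IsTracePreserving Γ ∧ hsNorm Γ = 1 ∧
    ∀ U : Matrix.unitaryGroup (Fin d) ℂ, 0 ≤ pairRe Γ (adU U)

lemma IsNormalizedDual.pairRe_id_nonneg {d : ℕ} {Γ : Md d →ₗ[ℂ] Md d}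
    (hΓ : IsNormalizedDual Γ) : 0 ≤ pairRe Γ LinearMap.id := by
  simpa only [adU_one] using hΓ.2.2.2.2 1

lemma IsNormalizedDual.memD {d : ℕ} {Γ : Md d →ₗ[ℂ] Md d} (hΓ : IsNormalizedDual Γ)
    (h0 : pairRe Γ LinearMap.id = 0) : MemD Γ := by
  obtain ⟨hHP, hU, hTP, -, hC⟩ := hΓ
  exact ⟨hHP, hU, hTP, by rwa [pairRe_comm], fun U => pairRe_comm Γ (adU U) ▸ hC U⟩

lemma isCompact_setOf_isNormalizedDual_unchoi (d : ℕ) :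
    IsCompact {M : Matrix (Fin d × Fin d) (Fin d × Fin d) ℂ | IsNormalizedDual (unchoi M)} := by
  have hev := continuous_unchoi_apply (d := d)
  have hclosed : IsClosed {M : Matrix (Fin d × Fin d) (Fin d × Fin d) ℂ |
      IsNormalizedDual (unchoi M)} := by
    simp only [IsNormalizedDual, IsHermitianPreserving, IsUnital, IsTracePreserving,
      Set.ofPred_and, Set.ofPred_forall]
    exact (isClosed_iInter fun X => isClosed_eq (hev _) (hev X).matrix_conjTranspose).inter <|
      (isClosed_eq (hev 1) continuous_const).inter <|
      (isClosed_iInter fun X => isClosed_eq (hev X).matrix_trace continuous_const).inter <|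
      (isClosed_eq continuous_hsNorm_unchoi continuous_const).inter <|
      isClosed_iInter fun U => isClosed_le continuous_const (continuous_pairRe_unchoi_left _)
  refine Metric.isCompact_of_isClosed_isBounded hclosed <|
    (Metric.isBounded_closedBall (x := 0) (r := 1)).subset fun M hM => ?_
  have hnorm : pairRe (unchoi M) (unchoi M) = 1 := Real.sqrt_eq_one.mp hM.2.2.2.1
  rw [pairRe, choi_unchoi] at hnorm
  simpa using norm_le_one_of_re_trace_conjTranspose_mul_self_eq_one hnorm

theorem stmt_13_general (d : ℕ) (L : Md d →ₗ[ℂ] Md d)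
    (hL : ∀ Γ : Md d →ₗ[ℂ] Md d, MemD Γ → 0 ≤ pairRe Γ L) :
    ∀ r : ℝ, 0 < r → ∃ η : ℝ, 0 < η ∧
      ∀ Γ : Md d →ₗ[ℂ] Md d,
        IsHermitianPreserving Γ → IsUnital Γ → IsTracePreserving Γ →
        hsNorm Γ = 1 →
        (∀ U : Matrix.unitaryGroup (Fin d) ℂ, 0 ≤ pairRe Γ (adU U)) →
        pairRe Γ LinearMap.id < η →
        -r ≤ pairRe Γ L := by
  intro r hr
  obtain ⟨η, hη, hsmall⟩ := (isCompact_setOf_isNormalizedDual_unchoi d).exists_pos_forall_lt_imp_lt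
    (continuous_pairRe_unchoi_left LinearMap.id) (continuous_pairRe_unchoi_left L)
    (fun M hM => hM.pairRe_id_nonneg)
    (fun M hM h0 => (neg_neg_of_pos hr).trans_le (hL _ (hM.memD h0)))
  refine ⟨η, hη, fun Γ hHP hU hTP hN hC hid => ?_⟩
  have hΓ : IsNormalizedDual (unchoi (choi Γ)) := by
    rw [unchoi_choi]
    exact ⟨hHP, hU, hTP, hN, hC⟩
  simpa only [unchoi_choi] using (hsmall (choi Γ) hΓ (by rwa [unchoi_choi])).le

/-- if `⟨Γ, L⟩ ≥ 0` for all `Γ ∈ D(d)`, then for every `r > 0` there is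
`η > 0` such that every norm-one `Γ` in the dual cone with `⟨Γ, id⟩ < η` satisfies
`⟨Γ, L⟩ ≥ -r`. -/
theorem stmt_13 (d : ℕ) (L : Md d →ₗ[ℂ] Md d) (hLh : IsHermitianPreserving L)
    (hL : ∀ Γ : Md d →ₗ[ℂ] Md d, MemD Γ → 0 ≤ pairRe Γ L) :
    ∀ r : ℝ, 0 < r → ∃ η : ℝ, 0 < η ∧
      ∀ Γ : Md d →ₗ[ℂ] Md d,
        IsHermitianPreserving Γ → IsUnital Γ → IsTracePreserving Γ →
        hsNorm Γ = 1 →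
        (∀ U : Matrix.unitaryGroup (Fin d) ℂ, 0 ≤ pairRe Γ (adU U)) →
        pairRe Γ LinearMap.id < η →
        -r ≤ pairRe Γ L :=
  stmt_13_general d L hL
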